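/- arXiv:1212.5951 — 2 statements merged into one kernel-verified Lean document; each statement's English description precedes it below -/
import Mathlib

section
/- Let X ⊆ A^{Σ*} be a tree shift whose set R(X) of regular configurations is dense in X. Then every cellular automaton τ : X → X (with image contained in X) is surjunctive: if τ is injective then τ is surjective. -/
/-! Common definitions: configurations over the regular rooted tree `Σ*`
(words = `List Sg`), the shift action, tree shifts, blocks, shifts of finite
type, cellular automata, sofic tree shifts, unrestricted Rabin automata. -/

/-- The shift action: `f^w (w') = f (w ++ w')`. -/
def shiftMap {Sg A : Type} (f : List Sg → A) (w : List Sg) : List Sg → A :=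
  fun w' => f (w ++ w')

/-- The orbit `{f^w : w ∈ Σ*}` of a configuration under the shift action. -/
def shiftOrbit {Sg A : Type} (f : List Sg → A) : Set (List Sg → A) :=
  Set.range (shiftMap f)

/-- A configuration is regular if its orbit under the shift action is finite. -/
def IsRegularConfig {Sg A : Type} (f : List Sg → A) : Prop :=
  (shiftOrbit f).Finite

/-- A tree shift: a subset of `A^{Σ*}` that is closed in the prodiscrete
topology and invariant under the shift action. -/
def IsTreeShift {Sg A : Type} [TopologicalSpace A] (X : Set (List Sg → A)) : Prop :=
  IsClosed X ∧ ∀ f ∈ X, ∀ w : List Sg, shiftMap f w ∈ X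

/-- A block of size `n + 1`: a map `Δ_{n+1} → A`, where `Δ_k` is the set of
words of length `< k` (so blocks have size `≥ 1`). -/
def TreeBlock (Sg A : Type) : Type :=
  (n : ℕ) × ({w : List Sg // w.length < n + 1} → A)

/-- The restriction of `f^w` to `Δ_{n+1}`, viewed as a block. -/
def blockAt {Sg A : Type} (f : List Sg → A) (w : List Sg) (n : ℕ) : TreeBlock Sg A :=
  ⟨n, fun m => f (w ++ m.val)⟩

/-- `X(F)`: the set of configurations avoiding every block in `F`. -/
def avoids {Sg A : Type} (F : Set (TreeBlock Sg A)) : Set (List Sg → A) :=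
  {f | ∀ (w : List Sg) (n : ℕ), blockAt f w n ∉ F}

/-- A tree shift of finite type: `X = X(F)` for some finite set `F` of blocks. -/
def IsSFT {Sg A : Type} (X : Set (List Sg → A)) : Prop :=
  ∃ F : Set (TreeBlock Sg A), F.Finite ∧ X = avoids F

/-- A cellular automaton `τ : X → B^{Σ*}`: there are a finite memory set
`M ⊆ Σ*` and a local map `μ : A^M → B` with `τ(f)(w) = μ((f^w)|_M)`. -/
def IsCellularAutomaton {Sg A B : Type} (X : Set (List Sg → A))
    (τ : X → List Sg → B) : Prop :=
  ∃ (M : Finset (List Sg)) (μ : ({m : List Sg // m ∈ M} → A) → B),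
    ∀ (f : X) (w : List Sg), τ f w = μ (fun m => f.val (w ++ m.val))

/-- A sofic tree shift: the image of a tree shift of finite type under a
cellular automaton. -/
def IsSofic {Sg A : Type} (X : Set (List Sg → A)) : Prop :=
  ∃ (C : Type) (_ : Finite C) (Y : Set (List Sg → C)) (τ : Y → List Sg → A),
    IsSFT Y ∧ IsCellularAutomaton Y τ ∧ X = Set.range τ

/-- An unrestricted Rabin automaton: a nonempty finite state set `S` and a set
of transition bundles `𝒯 ⊆ S × A × S^Σ`. -/
structure URA (Sg A : Type) where
  S : Type
  [finS : Finite S]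
  [neS : Nonempty S]
  T : Set (S × A × (Sg → S))

attribute [instance] URA.finS URA.neS

/-- Acceptance of a configuration by an unrestricted Rabin automaton. -/
def URA.Accepts {Sg A : Type} (𝒜 : URA Sg A) (f : List Sg → A) : Prop :=
  ∃ α : List Sg → 𝒜.S,
    ∀ w : List Sg, (α w, f w, fun σ => α (w ++ [σ])) ∈ 𝒜.T

/-- `Sh_𝒜`: the set of configurations accepted by `𝒜`. -/
def URA.shift {Sg A : Type} (𝒜 : URA Sg A) : Set (List Sg → A) :=
  {f | 𝒜.Accepts f}

/-- `𝒜` is essential if every state is the source of some transition bundle. -/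
def URA.Essential {Sg A : Type} (𝒜 : URA Sg A) : Prop :=
  ∀ s : 𝒜.S, ∃ t ∈ 𝒜.T, t.1 = s

/-- `𝒜` is co-deterministic if for every terminal sequence and label there is
at most one transition bundle with that terminal sequence and label. -/
def URA.CoDeterministic {Sg A : Type} (𝒜 : URA Sg A) : Prop :=
  ∀ t ∈ 𝒜.T, ∀ t' ∈ 𝒜.T, t.2.1 = t'.2.1 → t.2.2 = t'.2.2 → t = t'

/-- `𝒜` is co-complete if for every terminal sequence and label there is at
least one transition bundle with that terminal sequence and label. -/
def URA.CoComplete {Sg A : Type} (𝒜 : URA Sg A) : Prop :=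
  ∀ (s : Sg → 𝒜.S) (a : A), ∃ t ∈ 𝒜.T, t.2.1 = a ∧ t.2.2 = s

/-- One step along a bundle path: some transition bundle has source `s` and
`σ`-terminal state `s'` for some `σ`. -/
def URA.Step {Sg A : Type} (𝒜 : URA Sg A) (s s' : 𝒜.S) : Prop :=
  ∃ t ∈ 𝒜.T, t.1 = s ∧ ∃ σ : Sg, t.2.2 σ = s'

/-- `𝒜` is strongly connected if any state can be joined to any other by a
bundle path (possibly empty). -/
def URA.StronglyConnected {Sg A : Type} (𝒜 : URA Sg A) : Prop :=
  ∀ s s' : 𝒜.S, Relation.ReflTransGen 𝒜.Step s s'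

/-- A tree shift `X` is irreducible if for all blocks `p ∈ X_n`, `q ∈ X_m`
there is `f ∈ X` with `f|_{Δ_n} = p` and, for every `w ∈ Σ^n`, some `v` with
`f|_{w v Δ_m} = w v · q`. -/
def IsIrreducibleShift {Sg A : Type} (X : Set (List Sg → A)) : Prop :=
  ∀ (n m : ℕ) (p q : List Sg → A),
    (∃ fp ∈ X, ∀ u : List Sg, u.length < n → fp u = p u) →
    (∃ fq ∈ X, ∀ u : List Sg, u.length < m → fq u = q u) →
    ∃ f ∈ X, (∀ u : List Sg, u.length < n → f u = p u) ∧
      ∀ w : List Sg, w.length = n → ∃ v : List Sg,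
        ∀ u : List Sg, u.length < m → f (w ++ v ++ u) = q u

/-- A subtree of `Σ*`: contains the root `ε` and is prefix-closed. -/
def IsSubtree {Sg : Type} (T : Set (List Sg)) : Prop :=
  ([] : List Sg) ∈ T ∧ ∀ u v : List Sg, u ++ v ∈ T → u ∈ T

/-- A full subtree: each vertex has either all of its children or none. -/
def IsFullSubtree {Sg : Type} (T : Set (List Sg)) : Prop :=
  IsSubtree T ∧ ∀ w ∈ T, (∀ σ : Sg, w ++ [σ] ∈ T) ∨ (∀ σ : Sg, w ++ [σ] ∉ T)

/-- `T⁺ = T ∪ {wσ : w ∈ T, σ ∈ Σ}`. -/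
def treePlus {Sg : Type} (T : Set (List Sg)) : Set (List Sg) :=
  T ∪ {x | ∃ w ∈ T, ∃ σ : Sg, x = w ++ [σ]}

/-- Acceptance of the full-tree-pattern `p : T → A` by the finite-tree
automaton `𝒜(I, F)` (initial states `I`, final state `F`). -/
def FTAccepts {Sg A : Type} (𝒜 : URA Sg A) (I : Set 𝒜.S) (F : 𝒜.S)
    (T : Set (List Sg)) (p : List Sg → A) : Prop :=
  ∃ α : List Sg → 𝒜.S,
    (∀ w ∈ T, (α w, p w, fun σ => α (w ++ [σ])) ∈ 𝒜.T) ∧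
    α [] ∈ I ∧
    ∀ w ∈ treePlus T, w ∉ T → α w = F

/-- A Rabin automaton: an unrestricted Rabin automaton together with a set of
initial states and a family of accepting sets. -/
structure RabinAutomaton (Sg A : Type) where
  toURA : URA Sg A
  I : Set toURA.S
  Acc : Set (Set toURA.S)

/-- Acceptance by a Rabin automaton: a homomorphism realizing `f`, starting at
an initial state, and such that along every right-infinite word, the set of
states visited infinitely often belongs to the family of accepting sets. -/
def RabinAccepts {Sg A : Type} (𝒜 : RabinAutomaton Sg A) (f : List Sg → A) : Prop :=
  ∃ α : List Sg → 𝒜.toURA.S,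
    (∀ w : List Sg, (α w, f w, fun σ => α (w ++ [σ])) ∈ 𝒜.toURA.T) ∧
    α [] ∈ 𝒜.I ∧
    ∀ ω : ℕ → Sg,
      {s : 𝒜.toURA.S | ∀ N : ℕ, ∃ n ≥ N, α ((List.range n).map ω) = s} ∈ 𝒜.Acc

lemma shiftMap_shiftMap {Sg A : Type} (f : List Sg → A) (u v : List Sg) :
    shiftMap (shiftMap f u) v = shiftMap f (u ++ v) := by
  funext w; simp [shiftMap, List.append_assoc]

lemma orbit_shift_closed {Sg A : Type} (g : List Sg → A) {h : List Sg → A}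
    (hh : h ∈ shiftOrbit g) (m : List Sg) : shiftMap h m ∈ shiftOrbit g := by
  obtain ⟨u, rfl⟩ := hh
  exact ⟨u ++ m, (shiftMap_shiftMap g u m).symm⟩

/-- a cellular automaton `τ : X → X` on a tree shift whose
regular configurations are dense is surjunctive. -/
theorem surjunctive_of_regular_dense {Sg A : Type} [Finite Sg] [Nonempty Sg]
    [Finite A] [TopologicalSpace A] [DiscreteTopology A]
    (X : Set (List Sg → A)) (hX : IsTreeShift X)
    (hd : X ⊆ closure {f | f ∈ X ∧ IsRegularConfig f})
    (τ : X → List Sg → A) (hτ : IsCellularAutomaton X τ)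
    (him : ∀ f : X, τ f ∈ X) :
    Function.Injective τ → ∀ g ∈ X, ∃ f : X, τ f = g := by
  intro hinj g hgX
  obtain ⟨M, μ, hμ⟩ := hτ
  -- τ is continuous
  have hcont : Continuous τ := by
    rw [continuous_pi_iff]
    intro w
    have heq : (fun f : X => τ f w)
        = μ ∘ (fun f : X => fun m : {m : List Sg // m ∈ M} => f.val (w ++ m.val)) := by
      funext f; exact hμ f w
    rw [heq]
    exact continuous_of_discreteTopology.comp
      (continuous_pi fun m => (continuous_apply _).comp continuous_subtype_val)
  -- range of τ is closed
  have hXc : IsCompact X := hX.1.isCompact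
  haveI : CompactSpace X := isCompact_iff_compactSpace.mp hXc
  have hclosed : IsClosed (Set.range τ) := (isCompact_range hcont).isClosed
  -- every regular configuration of X is in the range of τ
  have hreg : ∀ g0 ∈ X, IsRegularConfig g0 → g0 ∈ Set.range τ := by
    intro g0 hg0X hg0
    haveI hQfin : Finite (shiftOrbit g0) := hg0.to_subtype
    set E : Set (List Sg → A) :=
      {f | f ∈ X ∧ ∃ lam : shiftOrbit g0 → A,
        ∀ w : List Sg, f w = lam ⟨shiftMap g0 w, ⟨w, rfl⟩⟩} with hE
    have hEfin : E.Finite := by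
      have hsub : E ⊆ (fun lam : shiftOrbit g0 → A =>
          fun w => lam ⟨shiftMap g0 w, ⟨w, rfl⟩⟩) '' Set.univ := by
        rintro f ⟨hfX, lam, hlam⟩
        exact ⟨lam, trivial, by funext w; exact (hlam w).symm⟩
      exact (Set.finite_univ.image _).subset hsub
    -- τ maps E into E
    have hmapE : ∀ f : X, f.val ∈ E → τ f ∈ E := by
      rintro f ⟨hfX, lam, hlam⟩
      refine ⟨him f, fun q => μ (fun m => lam ⟨shiftMap q.val m.val,
        orbit_shift_closed g0 q.2 m.val⟩), ?_⟩
      intro w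
      rw [hμ f w]
      refine congrArg μ ?_
      funext m
      rw [hlam (w ++ m.val)]
      exact congrArg lam (Subtype.ext (shiftMap_shiftMap g0 w m.val).symm)
    -- the finite set S of elements of X whose value lies in E
    haveI : Finite E := hEfin.to_subtype
    haveI hSfin : Finite {f : X // f.val ∈ E} := by
      refine Finite.of_injective (fun f => (⟨f.1.1, f.2⟩ : E)) ?_
      intro a b h
      exact Subtype.ext (Subtype.ext (congrArg (fun x : E => x.val) h))
    let F : {f : X // f.val ∈ E} → {f : X // f.val ∈ E} :=
      fun f => ⟨⟨τ f.1, him f.1⟩, hmapE f.1 f.2⟩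
    have hFinj : Function.Injective F := by
      intro a b h
      have : τ a.1 = τ b.1 := congrArg (fun x => x.1.1) h
      exact Subtype.ext (hinj this)
    have hFsurj : Function.Surjective F := Finite.injective_iff_surjective.mp hFinj
    have hg0E : g0 ∈ E := by
      refine ⟨hg0X, fun q => q.val [], ?_⟩
      intro w
      simp [shiftMap]
    obtain ⟨f, hf⟩ := hFsurj ⟨⟨g0, hg0X⟩, hg0E⟩
    exact ⟨f.1, congrArg (fun x => x.1.1) hf⟩
  -- conclude by density
  have h1 : {f | f ∈ X ∧ IsRegularConfig f} ⊆ Set.range τ :=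
    fun f hf => hreg f hf.1 hf.2
  have h2 : g ∈ Set.range τ := by
    have := hd hgX
    have h3 : closure {f | f ∈ X ∧ IsRegularConfig f} ⊆ Set.range τ :=
      hclosed.closure_subset_iff.mpr h1
    exact h3 this
  obtain ⟨f, hf⟩ := h2
  exact ⟨f, hf⟩
end

section
/- Let 𝒜 = (S, Σ, A, 𝒯) be a strongly connected unrestricted Rabin automaton. Then the sofic tree shift Sh_𝒜 is irreducible. -/
/-! Strong connectivity and one accepted configuration make every state the source of a
bundle, so from every state a run can be grown by always following a fixed outgoing bundle.
Walking back along a bundle path from a state `s` to the root state of a run of `q`, and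
grafting such arbitrary runs onto the side branches, gives a run from `s` that reads `q`
below some word `v`. The configuration sought is `p` on `Δ_n` with, under each `w ∈ Σ^n`,
such a run from the state that the run of `p` assigns to `w`. -/

def followChoice {Sg S A : Type} (φ : S → S × A × (Sg → S)) : S → List Sg → S
  | s, [] => s
  | s, σ :: w => followChoice φ ((φ s).2.2 σ) w

theorem followChoice_append_singleton {Sg S A : Type} (φ : S → S × A × (Sg → S))
    (s : S) (w : List Sg) (σ : Sg) :
    followChoice φ s (w ++ [σ]) = (φ (followChoice φ s w)).2.2 σ := by
  induction w generalizing s with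
  | nil => rfl
  | cons τ w ih => exact ih _

def consTree {Sg X : Type} (x : X) (g : Sg → List Sg → X) : List Sg → X
  | [] => x
  | τ :: w => g τ w

def spliceAt {Sg X : Type} (n : ℕ) (p : List Sg → X) (g : List Sg → List Sg → X)
    (x : List Sg) : X :=
  if x.length < n then p x else g (x.take n) (x.drop n)

section spliceAt

variable {Sg X : Type} {n : ℕ} {p : List Sg → X} {g : List Sg → List Sg → X}

theorem spliceAt_of_lt {x : List Sg} (hx : x.length < n) : spliceAt n p g x = p x :=
  if_pos hx

theorem spliceAt_of_le {x : List Sg} (hx : n ≤ x.length) :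
    spliceAt n p g x = g (x.take n) (x.drop n) :=
  if_neg (Nat.not_lt.2 hx)

theorem spliceAt_append {w : List Sg} (hw : w.length = n) (u : List Sg) :
    spliceAt n p g (w ++ u) = g w u := by
  rw [spliceAt_of_le (by simp [hw]), List.take_left' hw, List.drop_left' hw]

end spliceAt

namespace URA

def IsRun {Sg A : Type} (𝒜 : URA Sg A) (f : List Sg → A) (α : List Sg → 𝒜.S) : Prop :=
  ∀ w : List Sg, (α w, f w, fun σ => α (w ++ [σ])) ∈ 𝒜.T

variable {Sg A : Type} {𝒜 : URA Sg A}

theorem StronglyConnected.essential (h : 𝒜.StronglyConnected) {f : List Sg → A}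
    (hf : f ∈ 𝒜.shift) : 𝒜.Essential := by
  obtain ⟨α, hα⟩ := hf
  intro s
  rcases (h s (α [])).cases_head with rfl | ⟨_, ⟨t, ht, rfl, _⟩, _⟩
  · exact ⟨_, hα [], rfl⟩
  · exact ⟨t, ht, rfl⟩

theorem Essential.exists_run (h : 𝒜.Essential) (s : 𝒜.S) :
    ∃ f α, 𝒜.IsRun f α ∧ α [] = s := by
  choose φ hφT hφ1 using h
  refine ⟨fun w => (φ (followChoice φ s w)).2.1, followChoice φ s, fun w => ?_, rfl⟩
  convert hφT (followChoice φ s w) using 1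
  exact Prod.ext (hφ1 _).symm
    (Prod.ext rfl (funext (followChoice_append_singleton φ s w)))

theorem isRun_consTree {t : 𝒜.S × A × (Sg → 𝒜.S)} (ht : t ∈ 𝒜.T)
    {fs : Sg → List Sg → A} {αs : Sg → List Sg → 𝒜.S} (hrun : ∀ τ, 𝒜.IsRun (fs τ) (αs τ))
    (hroot : ∀ τ, αs τ [] = t.2.2 τ) :
    𝒜.IsRun (consTree t.2.1 fs) (consTree t.1 αs) := by
  rintro (_ | ⟨τ, w⟩)
  · convert ht using 1
    exact Prod.ext rfl (Prod.ext rfl (funext hroot))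
  · exact hrun τ w

theorem Essential.exists_run_reaching (hess : 𝒜.Essential) {s s' : 𝒜.S}
    (hpath : Relation.ReflTransGen 𝒜.Step s s') {f' : List Sg → A} {α' : List Sg → 𝒜.S}
    (hrun : 𝒜.IsRun f' α') (hroot : α' [] = s') :
    ∃ v f α, 𝒜.IsRun f α ∧ α [] = s ∧ ∀ u, f (v ++ u) = f' u := by
  induction hpath using Relation.ReflTransGen.head_induction_on with
  | refl => exact ⟨[], f', α', hrun, hroot, fun _ => rfl⟩
  | head hstep _ ih =>
    obtain ⟨v, f, α, hrun, hroot, hf⟩ := ih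
    obtain ⟨t, ht, rfl, σ, hσ⟩ := hstep
    classical
    choose fs αs hruns hroots using fun τ => hess.exists_run (t.2.2 τ)
    refine ⟨σ :: v, consTree t.2.1 (Function.update fs σ f),
      consTree t.1 (Function.update αs σ α), isRun_consTree ht (fun τ => ?_) (fun τ => ?_),
      rfl, fun u => by simp [consTree, hf]⟩
    · rcases eq_or_ne τ σ with rfl | hτ <;> simp [*]
    · rcases eq_or_ne τ σ with rfl | hτ <;> simp [*]

theorem isRun_spliceAt {n : ℕ} {fp : List Sg → A} {αp : List Sg → 𝒜.S} (hp : 𝒜.IsRun fp αp)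
    {g : List Sg → List Sg → A} {β : List Sg → List Sg → 𝒜.S}
    (hg : ∀ w, w.length = n → 𝒜.IsRun (g w) (β w) ∧ β w [] = αp w) :
    𝒜.IsRun (spliceAt n fp g) (spliceAt n αp β) := by
  intro w
  rcases lt_or_ge w.length n with hw | hw
  · have hchild : ∀ x : List Sg, x.length ≤ n → spliceAt n αp β x = αp x := by
      intro x hx
      rcases hx.lt_or_eq with hx | hx
      · exact spliceAt_of_lt hx
      · simpa using (spliceAt_append (p := αp) (g := β) hx []).trans (hg x hx).2
    have hchildren : (fun σ => spliceAt n αp β (w ++ [σ])) = fun σ => αp (w ++ [σ]) :=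
      funext fun σ => hchild _ (by simpa using hw)
    simpa only [spliceAt_of_lt hw, hchildren] using hp w
  · have hchild : ∀ σ : Sg,
        spliceAt n αp β (w ++ [σ]) = β (w.take n) (w.drop n ++ [σ]) := fun σ => by
      have hlen : n ≤ (w ++ [σ]).length := by
        simp only [List.length_append, List.length_singleton]; omega
      rw [spliceAt_of_le hlen, List.take_append_of_le_length hw,
        List.drop_append_of_le_length hw]
    simp only [spliceAt_of_le hw, hchild]
    exact (hg _ (List.length_take_of_le hw)).1 _

end URA

theorem stronglyConnected_irreducible_general {Sg A : Type} (𝒜 : URA Sg A) (h : 𝒜.StronglyConnected) :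
    IsIrreducibleShift 𝒜.shift := by
  rintro n m p q ⟨fp, ⟨αp, hp⟩, hfp⟩ ⟨fq, ⟨αq, hq⟩, hfq⟩
  have hess : 𝒜.Essential := h.essential ⟨αp, hp⟩
  choose V g β hrun hroot hgq using
    fun s => hess.exists_run_reaching (h s (αq [])) hq rfl
  refine ⟨spliceAt n fp (fun w => g (αp w)),
    ⟨_, URA.isRun_spliceAt hp fun w _ => ⟨hrun (αp w), hroot (αp w)⟩⟩,
    fun u hu => (spliceAt_of_lt hu).trans (hfp u hu), fun w hw => ⟨V (αp w), fun u hu => ?_⟩⟩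
  rw [List.append_assoc, spliceAt_append hw, hgq, hfq u hu]

/-- the tree shift accepted by a strongly connected unrestricted
Rabin automaton is irreducible. -/
theorem stronglyConnected_irreducible {Sg A : Type} [Finite Sg] [Nonempty Sg]
    [Finite A] (𝒜 : URA Sg A) (h : 𝒜.StronglyConnected) :
    IsIrreducibleShift 𝒜.shift :=
  stronglyConnected_irreducible_general 𝒜 h
end
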